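/- Let μ be a Borel probability measure on C[0,1]. Then there exists a function g ∈ C[0,1] such that μ({ f ∈ C[0,1] : Z(f − g) is a singleton }) > 0. Consequently, the set { f ∈ C[0,1] : Z(f) is a singleton } is non-shy in C[0,1]. -/

import Mathlib

open Set Metric MeasureTheory Filter Topology
open scoped ENNReal NNReal Classical

noncomputable section

/-- A set in an abelian topological group is *shy* (Haar null) if it is contained in a Borel
set `B` for which there is a Borel probability measure `μ` with `μ(B + x) = 0` for all `x`. -/
def IsShy {G : Type*} [TopologicalSpace G] [AddCommGroup G] (A : Set G) : Prop :=
  ∃ B : Set G, A ⊆ B ∧ MeasurableSet[borel G] B ∧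
    ∃ μ : @Measure G (borel G), @IsProbabilityMeasure G (borel G) μ ∧
      ∀ x : G, μ ((fun g => g + x) '' B) = 0

/-- A set is *prevalent* if its complement is shy. -/
def Prevalent {G : Type*} [TopologicalSpace G] [AddCommGroup G] (A : Set G) : Prop :=
  IsShy Aᶜ

/-- Hausdorff dimension of a set, with the convention `dim ∅ = -1`. -/
def hDim {X : Type*} [EMetricSpace X] (A : Set X) : EReal :=
  if A.Nonempty then ((dimH A : ℝ≥0∞) : EReal) else -1

/-- The least number of closed balls of radius `δ` needed to cover `A` (`∞` if there is no
finite such cover). -/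
def coverNum {X : Type*} [PseudoMetricSpace X] (A : Set X) (δ : ℝ) : ℝ≥0∞ :=
  sInf {n : ℝ≥0∞ | ∃ t : Finset X, (t.card : ℝ≥0∞) = n ∧ A ⊆ ⋃ x ∈ t, closedBall x δ}

/-- Upper box dimension `limsup_{δ→0+} log N_δ(A) / log (1/δ)`, with the conventions
`dim ∅ = -1` and `dim A = ∞` if `A` is not totally bounded. -/
def upperBoxDim {X : Type*} [PseudoMetricSpace X] (A : Set X) : EReal :=
  if A.Nonempty then
    (if ∀ δ : ℝ, 0 < δ → coverNum A δ < ⊤ then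
      Filter.limsup (fun δ : ℝ => ((Real.log (coverNum A δ).toReal / Real.log (1 / δ) : ℝ) : EReal))
        (𝓝[>] (0 : ℝ))
    else ⊤)
  else -1

/-- Packing dimension, defined as the modified upper box dimension:
`dim_P A = inf { sup_i (upper box dim of A_i) : A = ⋃_{i∈ℕ} A_i }`. -/
def packingDim {X : Type*} [PseudoMetricSpace X] (A : Set X) : EReal :=
  sInf ((fun F : ℕ → Set X => ⨆ i, upperBoxDim (F i)) '' {F | A = ⋃ i, F i})

/-- Least number of closed balls of radius `r/2` needed to cover the closed ball `B(x,r)`. -/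
def ballCoverNum {X : Type*} [PseudoMetricSpace X] (x : X) (r : ℝ) : ℝ≥0∞ :=
  sInf {n : ℝ≥0∞ | ∃ t : Finset X, (t.card : ℝ≥0∞) = n ∧
    closedBall x r ⊆ ⋃ y ∈ t, closedBall y (r / 2)}

/-- `doublingNum X r` is the least `N` such that every closed ball of radius `r` in `X`
can be covered by `N` closed balls of radius `r/2`. -/
def doublingNum (X : Type*) [PseudoMetricSpace X] (r : ℝ) : ℝ≥0∞ :=
  ⨆ x : X, ballCoverNum x r

/-- A metric space is *non-exploding* if `log N(r) / log r → 0` as `r → 0+`. -/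
def NonExploding (X : Type*) [PseudoMetricSpace X] : Prop :=
  Tendsto (fun r : ℝ => Real.log (doublingNum X r).toReal / Real.log r) (𝓝[>] (0 : ℝ)) (𝓝 0)

/-- Hausdorff dimension of a measure: `dim_H μ = inf {dim_H B : B Borel, μ(B) > 0}`. -/
def measHDim {X : Type*} [EMetricSpace X] [MeasurableSpace X] (μ : Measure X) : EReal :=
  sInf {s : EReal | ∃ B : Set X, MeasurableSet B ∧ 0 < μ B ∧ s = hDim B}

/-- Packing dimension of a measure: `dim_P μ = inf {dim_P B : B Borel, μ(B) > 0}`. -/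
def measPDim {X : Type*} [MetricSpace X] [MeasurableSpace X] (μ : Measure X) : EReal :=
  sInf {s : EReal | ∃ B : Set X, MeasurableSet B ∧ 0 < μ B ∧ s = packingDim B}

/-- The generalized Hausdorff measure `H^φ` associated to a gauge function `φ`:
`H^φ(A) = lim_{δ→0+} inf { Σᵢ φ(diam Aᵢ) : A ⊆ ⋃ᵢ Aᵢ, diam Aᵢ ≤ δ }`. -/
def gaugeHMeasure {X : Type*} [PseudoMetricSpace X] (φ : ℝ → ℝ) (A : Set X) : ℝ≥0∞ :=
  ⨆ (δ : ℝ) (_ : 0 < δ), ⨅ (S : ℕ → Set X) (_ : A ⊆ ⋃ i, S i)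
    (_ : ∀ i, Metric.diam (S i) ≤ δ), ∑' i, ENNReal.ofReal (φ (Metric.diam (S i)))


/-!
By inner regularity `μ` charges a compact set `K`, whose members are uniformly bounded and
uniformly equicontinuous. The function `g` is a Cantor-type staircase built along a binary tree of
boxes `[a, b] × [lo, hi]`. At a box with midpoint `m`, a pigeonhole argument picks a cut value `c`
in the middle third of `[lo, hi]` such that few `f ∈ K` have `f m` within `τ` of `c`, and a radius
`r` so small that every `f ∈ K` varies by less than `τ` on `[m - r, m + r]`. Then `g = lo` left of
`m - r`, `g = c` on the gap `[m - r/3, m + r/3]`, `g = hi` right of `m + r`, and `g` recurses on the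
children `[m - r, m - r/3] × [lo, c]` and `[m + r/3, m + r] × [c, hi]`.

A function of `K` that is never `τ`-close to a cut lies strictly inside the value range of every
box along its branch (at each box, the child on the side of `c` where `f m` lies). Hence `f - g`
vanishes only inside the nested boxes of this branch, whose lengths shrink to `0`, and it does
vanish by the intermediate value theorem. The discarded functions carry at most half the mass
of `K`.
-/

open scoped unitInterval

theorem exists_mem_Icc_measure_preimage_closedBall_le {X : Type*} [MeasurableSpace X]
    (ν : Measure X) [IsFiniteMeasure ν] {φ : X → ℝ} (hφ : Measurable φ) {p q ρ : ℝ} {N : ℕ}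
    (hN : 0 < N) (hρ₀ : 0 ≤ ρ) (hρ : 2 * ρ * N < q - p) :
    ∃ c ∈ Icc p q, ν (φ ⁻¹' closedBall c ρ) ≤ ν univ / N := by
  have hN' : (0 : ℝ) < N := by exact_mod_cast hN
  set h := (q - p) / N
  have hh : 2 * ρ < h := by rw [lt_div_iff₀ hN']; linarith
  set center : ℕ → ℝ := fun j => p + j * h
  have center_mem : ∀ j < N, center j ∈ Icc p q := fun j hj => by
    have : (j : ℝ) * h ≤ N * h := by gcongr; linarith
    have : (N : ℝ) * h = q - p := by simp only [h]; field_simp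
    constructor <;> nlinarith
  have disjoint : (Finset.range N : Set ℕ).PairwiseDisjoint
      fun j => φ ⁻¹' closedBall (center j) ρ := by
    intro j _ k _ hjk
    refine Set.disjoint_left.2 fun x hxj hxk => ?_
    have hsep : h ≤ dist (center j) (center k) := by
      have : (1 : ℝ) ≤ |(j : ℝ) - k| := by
        exact_mod_cast Int.one_le_abs (sub_ne_zero.2 (Nat.cast_injective.ne hjk : (j : ℤ) ≠ k))
      rw [Real.dist_eq, show center j - center k = (j - k) * h by simp only [center]; ring,
        abs_mul, abs_of_pos (by linarith : 0 < h)]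
      nlinarith
    have := dist_triangle_left (center j) (center k) (φ x)
    simp only [mem_preimage, mem_closedBall] at hxj hxk
    linarith
  by_contra! hbig
  have hsum : ν univ < ∑ j ∈ Finset.range N, ν (φ ⁻¹' closedBall (center j) ρ) :=
    calc ν univ = ∑ _j ∈ Finset.range N, ν univ / N := by
          rw [Finset.sum_const, Finset.card_range, nsmul_eq_mul,
            ENNReal.mul_div_cancel (by exact_mod_cast hN.ne') (ENNReal.natCast_ne_top N)]
      _ < _ := ENNReal.sum_lt_sum_of_nonempty (Finset.nonempty_range_iff.2 hN.ne')
          fun j hj => hbig _ (center_mem j (Finset.mem_range.1 hj))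
  rw [← measure_biUnion_finset disjoint
    fun j _ => hφ measurableSet_closedBall] at hsum
  exact (measure_mono (subset_univ _)).not_gt hsum

theorem ContinuousMap.uniformEquicontinuous_of_isCompact {X Y : Type*} [PseudoMetricSpace X]
    [CompactSpace X] [PseudoMetricSpace Y] {K : Set C(X, Y)} (hK : IsCompact K) :
    UniformEquicontinuous ((↑) : K → X → Y) := by
  have heval : UniformContinuousOn (fun p : C(X, Y) × X => p.1 p.2) (K ×ˢ univ) :=
    (hK.prod isCompact_univ).uniformContinuousOn_of_continuous continuous_eval.continuousOn
  rw [Metric.uniformEquicontinuous_iff]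
  intro ε hε
  obtain ⟨δ, hδ, h⟩ := Metric.uniformContinuousOn_iff.1 heval ε hε
  refine ⟨δ, hδ, fun x y hxy f => h (f, x) ⟨f.2, trivial⟩ (f, y) ⟨f.2, trivial⟩ ?_⟩
  simpa [Prod.dist_eq] using hxy

structure Box where
  a : ℝ
  b : ℝ
  lo : ℝ
  hi : ℝ

namespace Box

def mid (d : Box) : ℝ := (d.a + d.b) / 2

def midPt (d : Box) : I := projIcc 0 1 zero_le_one d.mid

def clamp (d : Box) (x : ℝ) : ℝ := max d.a (min d.b x)

def child (d : Box) (r c : ℝ) : Bool → Box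
  | false => ⟨d.mid - r, d.mid - r / 3, d.lo, c⟩
  | true => ⟨d.mid + r / 3, d.mid + r, c, d.hi⟩

def affine (d : Box) (x : ℝ) : ℝ := d.lo + (x - d.a) / (d.b - d.a) * (d.hi - d.lo)

structure Admissible (d : Box) : Prop where
  nonneg : 0 ≤ d.a
  a_lt_b : d.a < d.b
  le_one : d.b ≤ 1
  lo_lt_hi : d.lo < d.hi

variable {d : Box}

theorem clamp_of_le (hd : d.a ≤ d.b) {x : ℝ} (hx : x ≤ d.a) : d.clamp x = d.a := by
  simp [clamp, hx.trans hd, hx]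

theorem clamp_of_ge (hd : d.a ≤ d.b) {x : ℝ} (hx : d.b ≤ x) : d.clamp x = d.b := by
  simp [clamp, hd, hx]

theorem clamp_of_mem {x : ℝ} (hx : x ∈ Icc d.a d.b) : d.clamp x = x := by
  simp [clamp, hx.1, hx.2]

theorem mid_mem (hd : d.a ≤ d.b) : d.mid ∈ Icc d.a d.b := by
  unfold mid; constructor <;> linarith

theorem coe_midPt (hd : d.Admissible) : (d.midPt : ℝ) = d.mid := by
  have := mid_mem hd.a_lt_b.le
  rw [midPt, projIcc_of_mem _ ⟨hd.nonneg.trans this.1, this.2.trans hd.le_one⟩]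

theorem continuous_clamp (d : Box) : Continuous d.clamp := by
  unfold clamp; fun_prop

theorem clamp_mem (hd : d.a ≤ d.b) (x : ℝ) : d.clamp x ∈ Icc d.a d.b :=
  ⟨le_max_left _ _, max_le hd (min_le_left _ _)⟩

theorem affine_a : d.affine d.a = d.lo := by simp [affine]

theorem affine_b (hd : d.a < d.b) : d.affine d.b = d.hi := by
  simp [affine, div_self (sub_ne_zero.2 hd.ne')]

theorem affine_mem (hd : d.Admissible) {x : ℝ} (hx : x ∈ Icc d.a d.b) :
    d.affine x ∈ Icc d.lo d.hi := by
  have ht : (x - d.a) / (d.b - d.a) ∈ Icc (0 : ℝ) 1 :=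
    ⟨div_nonneg (by linarith [hx.1]) (by linarith [hd.a_lt_b]),
      div_le_one_of_le₀ (by linarith [hx.2]) (by linarith [hd.a_lt_b])⟩
  have hw : 0 < d.hi - d.lo := sub_pos.2 hd.lo_lt_hi
  simp only [affine, mem_Icc]
  constructor <;> nlinarith [ht.1, ht.2]

theorem continuous_affine (d : Box) : Continuous d.affine := by
  unfold affine; fun_prop

end Box

structure PosCompact [MeasurableSpace C(I, ℝ)] [BorelSpace C(I, ℝ)] (μ : Measure C(I, ℝ)) where
  K : Set C(I, ℝ)
  isCompact : IsCompact K
  measure_ne_zero : μ K ≠ 0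
  measure_ne_top : μ K ≠ ∞

namespace PosCompact

-- Addresses are weighted through `Encodable.encode`, so that `∑' s, (slots s)⁻¹ ≤ 1 / 2`.
def slots (s : List Bool) : ℕ := 2 ^ (Encodable.encode s + 2)

theorem slots_pos (s : List Bool) : 0 < slots s := by unfold slots; positivity

def tol (s : List Bool) (d : Box) : ℝ := (d.hi - d.lo) / (8 * slots s)

theorem tol_pos (s : List Bool) {d : Box} (hd : d.Admissible) : 0 < tol s d :=
  div_pos (sub_pos.2 hd.lo_lt_hi) (by have := slots_pos s; positivity)

theorem two_mul_tol_mul_slots (s : List Bool) (d : Box) :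
    2 * tol s d * slots s = (d.hi - d.lo) / 4 := by
  have := slots_pos s
  unfold tol; field_simp; ring

variable [MeasurableSpace C(I, ℝ)] [BorelSpace C(I, ℝ)] {μ : Measure C(I, ℝ)} (T : PosCompact μ)

def bound : ℝ := Classical.epsilon fun M => 0 < M ∧ ∀ f ∈ T.K, ∀ x, |f x| < M

theorem bound_spec : 0 < T.bound ∧ ∀ f ∈ T.K, ∀ x, |f x| < T.bound := by
  refine Classical.epsilon_spec (p := fun M => 0 < M ∧ ∀ f ∈ T.K, ∀ x, |f x| < M) ?_
  obtain ⟨R, hR⟩ := isBounded_iff_forall_norm_le.1 T.isCompact.isBounded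
  refine ⟨|R| + 1, by positivity, fun f hf x => ?_⟩
  calc |f x| ≤ ‖f‖ := f.norm_coe_le_norm x
    _ ≤ |R| := (hR f hf).trans (le_abs_self R)
    _ < |R| + 1 := lt_add_one _

def modulus (ε : ℝ) : ℝ := Classical.epsilon fun δ =>
  0 < δ ∧ ∀ f ∈ T.K, ∀ x y : I, dist x y ≤ δ → dist (f x) (f y) < ε

theorem modulus_spec {ε : ℝ} (hε : 0 < ε) : 0 < T.modulus ε ∧
    ∀ f ∈ T.K, ∀ x y : I, dist x y ≤ T.modulus ε → dist (f x) (f y) < ε := by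
  refine Classical.epsilon_spec (p := fun δ => 0 < δ ∧
    ∀ f ∈ T.K, ∀ x y : I, dist x y ≤ δ → dist (f x) (f y) < ε) ?_
  obtain ⟨δ, hδ, h⟩ := Metric.uniformEquicontinuous_iff.1
    (ContinuousMap.uniformEquicontinuous_of_isCompact T.isCompact) ε hε
  exact ⟨δ / 2, half_pos hδ, fun f hf x y hxy => h x y (by linarith) ⟨f, hf⟩⟩

def radius (s : List Bool) (d : Box) : ℝ := min (T.modulus (tol s d)) ((d.b - d.a) / 3)

def cut (s : List Bool) (d : Box) : ℝ := Classical.epsilon fun c =>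
  c ∈ Icc (d.lo + (d.hi - d.lo) / 3) (d.hi - (d.hi - d.lo) / 3) ∧
    μ.restrict T.K ((fun f : C(I, ℝ) => f d.midPt) ⁻¹' closedBall c (tol s d)) ≤
      μ T.K / slots s

def box : List Bool → Box
  | [] => ⟨0, 1, -T.bound, T.bound⟩
  | i :: s => (box s).child (T.radius s (box s)) (T.cut s (box s)) i

theorem radius_pos (s : List Bool) {d : Box} (hd : d.Admissible) : 0 < T.radius s d :=
  lt_min (T.modulus_spec (tol_pos s hd)).1 (by linarith [hd.a_lt_b])

theorem radius_le (s : List Bool) (d : Box) : T.radius s d ≤ (d.b - d.a) / 3 := min_le_right _ _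

theorem cut_spec (s : List Bool) {d : Box} (hd : d.Admissible) :
    T.cut s d ∈ Icc (d.lo + (d.hi - d.lo) / 3) (d.hi - (d.hi - d.lo) / 3) ∧
      μ.restrict T.K ((fun f : C(I, ℝ) => f d.midPt) ⁻¹' closedBall (T.cut s d) (tol s d)) ≤
        μ T.K / slots s := by
  have : IsFiniteMeasure (μ.restrict T.K) := isFiniteMeasure_restrict.2 T.measure_ne_top
  have hw := sub_pos.2 hd.lo_lt_hi
  obtain ⟨c, hc, hμ⟩ := exists_mem_Icc_measure_preimage_closedBall_le (μ.restrict T.K)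
    (continuous_eval_const d.midPt).measurable (p := d.lo + (d.hi - d.lo) / 3)
    (q := d.hi - (d.hi - d.lo) / 3) (slots_pos s) (tol_pos s hd).le
    (by rw [two_mul_tol_mul_slots]; linarith)
  exact Classical.epsilon_spec (p := fun c => c ∈ Icc _ _ ∧ _ ≤ _)
    ⟨c, hc, by rwa [Measure.restrict_apply_univ] at hμ⟩

theorem cut_mem_Ioo (s : List Bool) {d : Box} (hd : d.Admissible) :
    T.cut s d ∈ Ioo d.lo d.hi := by
  have hc := (T.cut_spec s hd).1
  have := hd.lo_lt_hi
  constructor <;> linarith [hc.1, hc.2]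

theorem admissible_box : ∀ s, (T.box s).Admissible
  | [] => ⟨le_rfl, zero_lt_one, le_rfl, neg_lt_self T.bound_spec.1⟩
  | i :: s => by
    have hd := admissible_box s
    have := hd.nonneg; have := hd.le_one
    have := T.radius_pos s hd; have := T.radius_le s (T.box s)
    have hc := T.cut_mem_Ioo s hd
    cases i <;> constructor <;> simp only [box, Box.child, Box.mid] <;> linarith [hc.1, hc.2]

theorem box_a_le_b (s : List Bool) : (T.box s).a ≤ (T.box s).b := (T.admissible_box s).a_lt_b.le

theorem box_cons_length_le (s : List Bool) (i : Bool) :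
    (T.box (i :: s)).b - (T.box (i :: s)).a ≤ 2 / 9 * ((T.box s).b - (T.box s).a) := by
  have := T.radius_le s (T.box s)
  cases i <;> simp only [box, Box.child] <;> linarith

theorem box_length_le : ∀ s, (T.box s).b - (T.box s).a ≤ (2 / 9) ^ s.length
  | [] => by simp [box]
  | i :: s => by
    rw [List.length_cons, pow_succ']
    linarith [T.box_cons_length_le s i, box_length_le s]

section Layout

variable (s : List Bool)

theorem box_a_lt_box_cons_a (i : Bool) : (T.box s).a < (T.box (i :: s)).a := by
  have := T.radius_pos s (T.admissible_box s); have := T.radius_le s (T.box s)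
  have := (T.admissible_box s).a_lt_b
  cases i <;> simp only [box, Box.child, Box.mid] <;> linarith

theorem box_cons_b_lt_box_b (i : Bool) : (T.box (i :: s)).b < (T.box s).b := by
  have := T.radius_pos s (T.admissible_box s); have := T.radius_le s (T.box s)
  have := (T.admissible_box s).a_lt_b
  cases i <;> simp only [box, Box.child, Box.mid] <;> linarith

theorem box_false_b_lt_mid : (T.box (false :: s)).b < (T.box s).mid := by
  have := T.radius_pos s (T.admissible_box s)
  simp only [box, Box.child]; linarith

theorem mid_lt_box_true_a : (T.box s).mid < (T.box (true :: s)).a := by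
  have := T.radius_pos s (T.admissible_box s)
  simp only [box, Box.child]; linarith

theorem abs_sub_mid_le {x : ℝ}
    (hx : x ∈ Icc (T.box (false :: s)).a (T.box (true :: s)).b) :
    |x - (T.box s).mid| ≤ T.radius s (T.box s) := by
  simp only [box, Box.child, mem_Icc] at hx
  rw [abs_le]; constructor <;> linarith [hx.1, hx.2]

theorem abs_sub_mid_le_of_mem_box_cons {i : Bool} {x : ℝ}
    (hx : x ∈ Icc (T.box (i :: s)).a (T.box (i :: s)).b) :
    |x - (T.box s).mid| ≤ T.radius s (T.box s) := by
  have := T.radius_pos s (T.admissible_box s)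
  refine T.abs_sub_mid_le s ⟨?_, ?_⟩ <;> cases i <;> simp only [box, Box.child, mem_Icc] at hx ⊢ <;>
    linarith [hx.1, hx.2]

theorem box_cons_width_le (i : Bool) :
    (T.box (i :: s)).hi - (T.box (i :: s)).lo ≤ 2 / 3 * ((T.box s).hi - (T.box s).lo) := by
  have hc := (T.cut_spec s (T.admissible_box s)).1
  cases i <;> simp only [box, Box.child] <;> linarith [hc.1, hc.2]

end Layout

-- Each clamped term is constant outside its child's interval, equal to the cut on the side facing
-- the other child; subtracting the cut glues the two children's stages along the gap.
def stage : ℕ → List Bool → ℝ → ℝ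
  | 0, s, x => (T.box s).affine x
  | k + 1, s, x => stage k (false :: s) ((T.box (false :: s)).clamp x) +
      stage k (true :: s) ((T.box (true :: s)).clamp x) - T.cut s (T.box s)

theorem stage_box_a : ∀ k s, T.stage k s (T.box s).a = (T.box s).lo
  | 0, s => Box.affine_a
  | k + 1, s => by
    rw [stage, Box.clamp_of_le (T.box_a_le_b _) (T.box_a_lt_box_cons_a s false).le,
      Box.clamp_of_le (T.box_a_le_b _) (T.box_a_lt_box_cons_a s true).le,
      stage_box_a k, stage_box_a k]
    simp only [box, Box.child]; ring

theorem stage_box_b : ∀ k s, T.stage k s (T.box s).b = (T.box s).hi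
  | 0, s => Box.affine_b (T.admissible_box s).a_lt_b
  | k + 1, s => by
    rw [stage, Box.clamp_of_ge (T.box_a_le_b _) (T.box_cons_b_lt_box_b s false).le,
      Box.clamp_of_ge (T.box_a_le_b _) (T.box_cons_b_lt_box_b s true).le,
      stage_box_b k, stage_box_b k]
    simp only [box, Box.child]; ring

theorem stage_succ_of_le_mid (k : ℕ) (s : List Bool) {x : ℝ} (hx : x ≤ (T.box s).mid) :
    T.stage (k + 1) s x = T.stage k (false :: s) ((T.box (false :: s)).clamp x) := by
  rw [stage, Box.clamp_of_le (T.box_a_le_b _) (hx.trans (T.mid_lt_box_true_a s).le),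
    stage_box_a]
  simp only [box, Box.child]; ring

theorem stage_succ_of_mid_le (k : ℕ) (s : List Bool) {x : ℝ} (hx : (T.box s).mid ≤ x) :
    T.stage (k + 1) s x = T.stage k (true :: s) ((T.box (true :: s)).clamp x) := by
  rw [stage, Box.clamp_of_ge (T.box_a_le_b _) ((T.box_false_b_lt_mid s).le.trans hx),
    stage_box_b]
  simp only [box, Box.child]; ring

theorem stage_mem : ∀ k s {x}, x ∈ Icc (T.box s).a (T.box s).b →
    T.stage k s x ∈ Icc (T.box s).lo (T.box s).hi
  | 0, s, _, hx => Box.affine_mem (T.admissible_box s) hx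
  | k + 1, s, x, _ => by
    have hf : T.stage k (false :: s) ((T.box (false :: s)).clamp x) ∈
        Icc (T.box s).lo (T.cut s (T.box s)) :=
      stage_mem k (false :: s) ((T.box _).clamp_mem (T.box_a_le_b _) x)
    have ht : T.stage k (true :: s) ((T.box (true :: s)).clamp x) ∈
        Icc (T.cut s (T.box s)) (T.box s).hi :=
      stage_mem k (true :: s) ((T.box _).clamp_mem (T.box_a_le_b _) x)
    rw [stage, mem_Icc]
    constructor <;> linarith [hf.1, hf.2, ht.1, ht.2]

theorem continuous_stage : ∀ k s, Continuous (T.stage k s)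
  | 0, s => (T.box s).continuous_affine
  | k + 1, s => by
    have hf := (continuous_stage k (false :: s)).comp (T.box (false :: s)).continuous_clamp
    have ht := (continuous_stage k (true :: s)).comp (T.box (true :: s)).continuous_clamp
    exact (hf.add ht).sub continuous_const

theorem abs_stage_succ_sub_le : ∀ k s {x}, x ∈ Icc (T.box s).a (T.box s).b →
    |T.stage (k + 1) s x - T.stage k s x| ≤ (2 / 3) ^ k * ((T.box s).hi - (T.box s).lo)
  | 0, s, x, hx => by
    have h1 := T.stage_mem 1 s hx
    have h0 := T.stage_mem 0 s hx
    rw [abs_le]; constructor <;> linarith [h1.1, h1.2, h0.1, h0.2]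
  | k + 1, s, x, _ => by
    rcases le_total x (T.box s).mid with hx | hx
    · rw [T.stage_succ_of_le_mid _ _ hx, T.stage_succ_of_le_mid _ _ hx, pow_succ, mul_assoc]
      refine (abs_stage_succ_sub_le k _ ((T.box _).clamp_mem (T.box_a_le_b _) x)).trans ?_
      gcongr; linarith [T.box_cons_width_le s false]
    · rw [T.stage_succ_of_mid_le _ _ hx, T.stage_succ_of_mid_le _ _ hx, pow_succ, mul_assoc]
      refine (abs_stage_succ_sub_le k _ ((T.box _).clamp_mem (T.box_a_le_b _) x)).trans ?_
      gcongr; linarith [T.box_cons_width_le s true]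

def approx (k : ℕ) : C(I, ℝ) :=
  ⟨fun x => T.stage k [] x, (T.continuous_stage k []).comp continuous_subtype_val⟩

theorem dist_approx_le (k : ℕ) :
    dist (T.approx k) (T.approx (k + 1)) ≤ 2 * T.bound * (2 / 3) ^ k := by
  have hM := T.bound_spec.1
  refine (ContinuousMap.dist_le (by positivity)).2 fun x => ?_
  rw [dist_comm, Real.dist_eq]
  refine (T.abs_stage_succ_sub_le k [] x.2).trans (le_of_eq ?_)
  simp only [box]; ring

def staircase : C(I, ℝ) := limUnder atTop T.approx

theorem tendsto_approx : Tendsto T.approx atTop (𝓝 T.staircase) :=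
  (cauchySeq_of_le_geometric _ _ (by norm_num) T.dist_approx_le).tendsto_limUnder

theorem tendsto_stage : ∀ s (x : I), (x : ℝ) ∈ Icc (T.box s).a (T.box s).b →
    Tendsto (fun k => T.stage k s x) atTop (𝓝 (T.staircase x))
  | [], x, _ => ((continuous_eval_const x).tendsto _).comp T.tendsto_approx
  | i :: s, x, hx => by
    have hx' : (x : ℝ) ∈ Icc (T.box s).a (T.box s).b :=
      ⟨(T.box_a_lt_box_cons_a s i).le.trans hx.1, hx.2.trans (T.box_cons_b_lt_box_b s i).le⟩
    refine ((tendsto_add_atTop_iff_nat 1).2 (tendsto_stage s x hx')).congr fun k => ?_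
    cases i
    · rw [T.stage_succ_of_le_mid _ _ (hx.2.trans (T.box_false_b_lt_mid s).le), Box.clamp_of_mem hx]
    · rw [T.stage_succ_of_mid_le _ _ ((T.mid_lt_box_true_a s).le.trans hx.1), Box.clamp_of_mem hx]

theorem staircase_eq_of_forall_stage_succ_eq {s : List Bool} {x : I}
    (hx : (x : ℝ) ∈ Icc (T.box s).a (T.box s).b) {v : ℝ} (h : ∀ k, T.stage (k + 1) s x = v) :
    T.staircase x = v :=
  tendsto_nhds_unique ((tendsto_add_atTop_iff_nat 1).2 (T.tendsto_stage s x hx))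
    (by simp only [h]; exact tendsto_const_nhds)

theorem staircase_mem {s : List Bool} {x : I} (hx : (x : ℝ) ∈ Icc (T.box s).a (T.box s).b) :
    T.staircase x ∈ Icc (T.box s).lo (T.box s).hi :=
  isClosed_Icc.mem_of_tendsto (T.tendsto_stage s x hx) (.of_forall fun k => T.stage_mem k s hx)

section Regions

variable {s : List Bool} {x : I}

theorem staircase_eq_lo (hx : (x : ℝ) ∈ Icc (T.box s).a (T.box (false :: s)).a) :
    T.staircase x = (T.box s).lo := by
  have hm := (T.box s).mid_mem (T.admissible_box s).a_lt_b.le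
  have hxm : (x : ℝ) ≤ (T.box s).mid :=
    hx.2.trans ((T.box_a_le_b _).trans (T.box_false_b_lt_mid s).le)
  refine T.staircase_eq_of_forall_stage_succ_eq ⟨hx.1, hxm.trans hm.2⟩ fun k => ?_
  rw [T.stage_succ_of_le_mid _ _ hxm, Box.clamp_of_le (T.box_a_le_b _) hx.2, stage_box_a]
  rfl

theorem staircase_eq_cut (hx : (x : ℝ) ∈ Icc (T.box (false :: s)).b (T.box (true :: s)).a) :
    T.staircase x = T.cut s (T.box s) := by
  have hx' : (x : ℝ) ∈ Icc (T.box s).a (T.box s).b :=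
    ⟨(T.box_a_lt_box_cons_a s false).le.trans ((T.box_a_le_b _).trans hx.1),
      hx.2.trans ((T.box_a_le_b _).trans (T.box_cons_b_lt_box_b s true).le)⟩
  refine T.staircase_eq_of_forall_stage_succ_eq hx' fun k => ?_
  rcases le_total (x : ℝ) (T.box s).mid with hxm | hxm
  · rw [T.stage_succ_of_le_mid _ _ hxm, Box.clamp_of_ge (T.box_a_le_b _) hx.1, stage_box_b]
    rfl
  · rw [T.stage_succ_of_mid_le _ _ hxm, Box.clamp_of_le (T.box_a_le_b _) hx.2, stage_box_a]
    rfl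

theorem staircase_eq_hi (hx : (x : ℝ) ∈ Icc (T.box (true :: s)).b (T.box s).b) :
    T.staircase x = (T.box s).hi := by
  have hm := (T.box s).mid_mem (T.admissible_box s).a_lt_b.le
  have hxm : (T.box s).mid ≤ x :=
    ((T.mid_lt_box_true_a s).le.trans (T.box_a_le_b _)).trans hx.1
  refine T.staircase_eq_of_forall_stage_succ_eq ⟨hm.1.trans hxm, hx.2⟩ fun k => ?_
  rw [T.stage_succ_of_mid_le _ _ hxm, Box.clamp_of_ge (T.box_a_le_b _) hx.1, stage_box_b]
  rfl

end Regions

def discard (s : List Bool) : Set C(I, ℝ) :=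
  {f ∈ T.K | dist (f (T.box s).midPt) (T.cut s (T.box s)) ≤ tol s (T.box s)}

def survivors : Set C(I, ℝ) := T.K \ ⋃ s, T.discard s

theorem measure_discard_le (s : List Bool) : μ (T.discard s) ≤ μ T.K / slots s := by
  have h := (T.cut_spec s (T.admissible_box s)).2
  rwa [Measure.restrict_apply
    (measurableSet_closedBall.preimage (continuous_eval_const _).measurable), inter_comm] at h

theorem measure_iUnion_discard_lt : μ (⋃ s, T.discard s) < μ T.K := by
  have hhalf : (2 : ℝ≥0∞) * 2⁻¹ ^ 2 = 2⁻¹ := by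
    rw [pow_two, ← mul_assoc, ENNReal.mul_inv_cancel two_ne_zero ENNReal.ofNat_ne_top, one_mul]
  calc μ (⋃ s, T.discard s) ≤ ∑' s, μ (T.discard s) := measure_iUnion_le _
    _ ≤ ∑' s : List Bool, μ T.K * 2⁻¹ ^ (Encodable.encode s + 2) :=
        ENNReal.tsum_le_tsum fun s => (T.measure_discard_le s).trans_eq <| by
          rw [slots, div_eq_mul_inv, Nat.cast_pow, Nat.cast_ofNat, ENNReal.inv_pow]
    _ ≤ μ T.K * ∑' n : ℕ, 2⁻¹ ^ (n + 2) := by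
        rw [ENNReal.tsum_mul_left]
        gcongr
        exact ENNReal.tsum_comp_le_tsum_of_injective Encodable.encode_injective _
    _ = μ T.K / 2 := by
        simp_rw [pow_add]
        rw [ENNReal.tsum_mul_right, ENNReal.tsum_geometric, ENNReal.one_sub_inv_two, inv_inv, hhalf,
          div_eq_mul_inv]
    _ < μ T.K := ENNReal.half_lt_self T.measure_ne_zero T.measure_ne_top

theorem measure_survivors_pos : 0 < μ T.survivors :=
  (tsub_pos_of_lt T.measure_iUnion_discard_lt).trans_le le_measure_sdiff

def branch (f : C(I, ℝ)) : ℕ → List Bool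
  | 0 => []
  | n + 1 => decide (T.cut (branch f n) (T.box (branch f n)) < f (T.box (branch f n)).midPt) ::
      branch f n

theorem length_branch (f : C(I, ℝ)) : ∀ n, (T.branch f n).length = n
  | 0 => rfl
  | n + 1 => congrArg Nat.succ (length_branch f n)

theorem sameSide_cut {f : C(I, ℝ)} (hf : f ∈ T.survivors) (s : List Bool) {x : I}
    (hx : |(x : ℝ) - (T.box s).mid| ≤ T.radius s (T.box s)) :
    (T.cut s (T.box s) < f (T.box s).midPt → T.cut s (T.box s) < f x) ∧
      (¬ T.cut s (T.box s) < f (T.box s).midPt → f x < T.cut s (T.box s)) := by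
  have hd := T.admissible_box s
  have hnear : dist (f x) (f (T.box s).midPt) < tol s (T.box s) := by
    refine (T.modulus_spec (tol_pos s hd)).2 f hf.1 _ _ ?_
    rw [Subtype.dist_eq, Real.dist_eq, Box.coe_midPt hd]
    exact hx.trans (min_le_left _ _)
  have hfar : tol s (T.box s) < dist (f (T.box s).midPt) (T.cut s (T.box s)) :=
    not_le.1 fun h => hf.2 (mem_iUnion.2 ⟨s, hf.1, h⟩)
  rw [Real.dist_eq, abs_lt] at hnear
  rw [Real.dist_eq] at hfar
  constructor <;> intro hc
  · rw [abs_of_pos (sub_pos.2 hc)] at hfar; linarith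
  · rw [abs_of_nonpos (by linarith [not_lt.1 hc])] at hfar; linarith

theorem mem_Ioo_of_survivor {f : C(I, ℝ)} (hf : f ∈ T.survivors) :
    ∀ n {x : I}, (x : ℝ) ∈ Icc (T.box (T.branch f n)).a (T.box (T.branch f n)).b →
      f x ∈ Ioo (T.box (T.branch f n)).lo (T.box (T.branch f n)).hi
  | 0, x, _ => abs_lt.1 (T.bound_spec.2 f hf.1 x)
  | n + 1, x, hx => by
    set s := T.branch f n
    have hx' : (x : ℝ) ∈ Icc (T.box s).a (T.box s).b :=
      ⟨(T.box_a_lt_box_cons_a s _).le.trans hx.1, hx.2.trans (T.box_cons_b_lt_box_b s _).le⟩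
    have hIH := mem_Ioo_of_survivor hf n hx'
    have hside := T.sameSide_cut hf s (T.abs_sub_mid_le_of_mem_box_cons s hx)
    by_cases hc : T.cut s (T.box s) < f (T.box s).midPt
    · have hb : T.branch f (n + 1) = true :: s := by simp [branch, s, hc]
      rw [hb]
      exact ⟨hside.1 hc, hIH.2⟩
    · have hb : T.branch f (n + 1) = false :: s := by simp [branch, s, hc]
      rw [hb]
      exact ⟨hIH.1, hside.2 hc⟩

section Zeros

variable {f : C(I, ℝ)} (hf : f ∈ T.survivors) {x : I} (hx : f x = T.staircase x)
include hf hx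

theorem not_cut_lt_of_mem_box_false {s : List Bool}
    (hxs : (x : ℝ) ∈ Icc (T.box (false :: s)).a (T.box (false :: s)).b) :
    ¬ T.cut s (T.box s) < f (T.box s).midPt := fun hc =>
  ((T.sameSide_cut hf s (T.abs_sub_mid_le_of_mem_box_cons s hxs)).1 hc).not_ge
    (hx ▸ (T.staircase_mem hxs).2)

theorem cut_lt_of_mem_box_true {s : List Bool}
    (hxs : (x : ℝ) ∈ Icc (T.box (true :: s)).a (T.box (true :: s)).b) :
    T.cut s (T.box s) < f (T.box s).midPt := by
  by_contra hc
  exact ((T.sameSide_cut hf s (T.abs_sub_mid_le_of_mem_box_cons s hxs)).2 hc).not_ge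
    (hx ▸ (T.staircase_mem hxs).1)

theorem mem_box_branch_of_eq : ∀ n, (x : ℝ) ∈ Icc (T.box (T.branch f n)).a (T.box (T.branch f n)).b
  | 0 => x.2
  | n + 1 => by
    set s := T.branch f n
    have hxs := mem_box_branch_of_eq n
    have hcor := T.mem_Ioo_of_survivor hf n hxs
    have hf_ab := (T.admissible_box (false :: s)).a_lt_b
    have ht_ab := (T.admissible_box (true :: s)).a_lt_b
    rcases lt_or_ge (x : ℝ) (T.box (false :: s)).a with h1 | h1
    · exact absurd (T.staircase_eq_lo ⟨hxs.1, h1.le⟩) (hx ▸ hcor.1.ne')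
    rcases le_or_gt (x : ℝ) (T.box (false :: s)).b with h2 | h2
    · have hb : T.branch f (n + 1) = false :: s := by
        simp [branch, s, T.not_cut_lt_of_mem_box_false hf hx ⟨h1, h2⟩]
      exact hb ▸ ⟨h1, h2⟩
    rcases lt_or_ge (x : ℝ) (T.box (true :: s)).a with h3 | h3
    · have hside := T.sameSide_cut hf s (T.abs_sub_mid_le s ⟨h1, h3.le.trans ht_ab.le⟩)
      have hgap := T.staircase_eq_cut ⟨h2.le, h3.le⟩
      by_cases hc : T.cut s (T.box s) < f (T.box s).midPt
      · exact absurd (hside.1 hc) (by rw [hx, hgap]; exact lt_irrefl _)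
      · exact absurd (hside.2 hc) (by rw [hx, hgap]; exact lt_irrefl _)
    rcases le_or_gt (x : ℝ) (T.box (true :: s)).b with h4 | h4
    · have hb : T.branch f (n + 1) = true :: s := by
        simp [branch, s, T.cut_lt_of_mem_box_true hf hx ⟨h3, h4⟩]
      exact hb ▸ ⟨h3, h4⟩
    · exact absurd (T.staircase_eq_hi ⟨h4.le, hxs.2⟩) (hx ▸ hcor.2.ne)

end Zeros

theorem existsUnique_sub_staircase_eq_zero {f : C(I, ℝ)} (hf : f ∈ T.survivors) :
    ∃! x : I, f x - T.staircase x = 0 := by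
  have hM := T.bound_spec.2 f hf.1
  have h0 : T.staircase 0 = -T.bound :=
    T.staircase_eq_lo (s := []) ⟨le_rfl, (T.box_a_lt_box_cons_a [] false).le⟩
  have h1 : T.staircase 1 = T.bound :=
    T.staircase_eq_hi (s := []) ⟨(T.box_cons_b_lt_box_b [] true).le, le_rfl⟩
  obtain ⟨x, hx⟩ : (0 : ℝ) ∈ range (⇑f - ⇑T.staircase) :=
    intermediate_value_univ 1 0 (f.continuous.sub T.staircase.continuous)
      ⟨by rw [Pi.sub_apply, h1]; linarith [(abs_lt.1 (hM 1)).2],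
        by rw [Pi.sub_apply, h0]; linarith [(abs_lt.1 (hM 0)).1]⟩
  refine ⟨x, hx, fun y hy => ?_⟩
  have hx' := T.mem_box_branch_of_eq hf (sub_eq_zero.1 hx)
  have hy' := T.mem_box_branch_of_eq hf (sub_eq_zero.1 hy)
  by_contra hne
  obtain ⟨n, hn⟩ := exists_pow_lt_of_lt_one (abs_pos.2 (sub_ne_zero.2 (Subtype.coe_ne_coe.2 hne)))
    (by norm_num : (2 / 9 : ℝ) < 1)
  have hlen := T.box_length_le (T.branch f n)
  rw [length_branch] at hlen
  have := abs_sub_le_of_le_of_le (hy' n).1 (hy' n).2 (hx' n).1 (hx' n).2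
  linarith

theorem measure_existsUnique_sub_staircase_eq_zero_pos :
    0 < μ {f | ∃! x : I, f x - T.staircase x = 0} :=
  T.measure_survivors_pos.trans_le
    (measure_mono fun _ hf => T.existsUnique_sub_staircase_eq_zero hf)

end PosCompact

theorem exists_measure_existsUnique_sub_eq_zero_pos [MeasurableSpace C(I, ℝ)]
    [BorelSpace C(I, ℝ)] (μ : Measure C(I, ℝ)) [IsFiniteMeasure μ] (hμ : μ ≠ 0) :
    ∃ g : C(I, ℝ), 0 < μ {f | ∃! x : I, f x - g x = 0} := by
  obtain ⟨K, -, hK, hpos⟩ := MeasurableSet.univ.exists_lt_isCompact_of_ne_top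
    (measure_ne_top μ univ) (pos_iff_ne_zero.2 (Measure.measure_univ_ne_zero.2 hμ))
  exact ⟨_, PosCompact.measure_existsUnique_sub_staircase_eq_zero_pos
    ⟨K, hK, hpos.ne', measure_ne_top μ K⟩⟩

/-- For every Borel probability measure `μ` on `C[0,1]` there is a `g ∈ C[0,1]` with
`μ({ f : Z(f - g) is a singleton }) > 0`; consequently the set of `f ∈ C[0,1]` whose zero set
is a singleton is non-shy in `C[0,1]`. -/
theorem singleton_zero_set_nonshy :
    (∀ μ : @Measure C(Set.Icc (0:ℝ) 1, ℝ) (borel C(Set.Icc (0:ℝ) 1, ℝ)),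
      @IsProbabilityMeasure C(Set.Icc (0:ℝ) 1, ℝ) (borel C(Set.Icc (0:ℝ) 1, ℝ)) μ →
      ∃ g : C(Set.Icc (0:ℝ) 1, ℝ),
        0 < μ {f : C(Set.Icc (0:ℝ) 1, ℝ) | ∃! x : Set.Icc (0:ℝ) 1, f x - g x = 0}) ∧
    ¬ IsShy {f : C(Set.Icc (0:ℝ) 1, ℝ) | ∃! x : Set.Icc (0:ℝ) 1, f x = 0} := by
  let _ : MeasurableSpace C(I, ℝ) := borel _
  have : BorelSpace C(I, ℝ) := ⟨rfl⟩
  have hpos : ∀ μ : Measure C(I, ℝ), IsProbabilityMeasure μ →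
      ∃ g : C(I, ℝ), 0 < μ {f | ∃! x : I, f x - g x = 0} :=
    fun μ _ => exists_measure_existsUnique_sub_eq_zero_pos μ (IsProbabilityMeasure.ne_zero μ)
  refine ⟨hpos, ?_⟩
  rintro ⟨B, hAB, -, ν, hν, hnull⟩
  obtain ⟨g, hg⟩ := hpos ν hν
  have hsub : {f | ∃! x : I, f x - g x = 0} ⊆ (fun h => h + g) '' B :=
    fun f hf => ⟨f - g, hAB hf, sub_add_cancel f g⟩
  exact hg.ne' (measure_mono_null hsub (hnull g))
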